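/- arXiv:1604.05313 — 3 statements merged into one kernel-verified Lean document; each statement's English description precedes it below -/
import Mathlib

section
/- For any τ > -2, σ > 0 and 0 ≤ η < 1, the coefficients c_k = 2 ∫_0^∞ t^{τ+4k+1} e^{-t² - σ(1-η)t⁴} dt / Γ((τ+4k+2)/2) satisfy, as k → ∞, c_k ≤ C · k^{-k} (e·η'/(4σ(1-η)))^k · k^{O(1)} for some constant, so that if |f_k| ≤ A (a/e)^k k^{k+b+1/2} then Σ_k c_k |f_k| η^k converges whenever η < 4σ/(a + 4σ). -/
/-!
Dropping `e^{-t²}` bounds the integral by the Gamma integral `¼ s^{-(p+1)/4} Γ((p+1)/4)`, where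
`s = σ(1-η)` and `p = τ + 4k + 1`; Legendre's duplication formula then gives
`c_k ≤ √π (4s)^{-(τ+2)/4} (4s)^{-k} / Γ(τ/4 + k + 1)`. As `Γ(τ/4 + k + 1) ≥ (k-1)! ≥ k^{k-1} e^{-k}`,
the `k`-th term is `O(k^{b+3/2} r^k)` with `r = aη/(4σ(1-η))`, and `r < 1` is exactly
`η < 4σ/(a + 4σ)`.
-/

open MeasureTheory Real Set Filter

-- `c_k` is `momentCoeff (τ + 4k + 1) (σ(1-η))`.
noncomputable def momentCoeff (p s : ℝ) : ℝ :=
  2 * (∫ t in Ioi (0 : ℝ), t ^ p * exp (-t ^ 2 - s * t ^ 4)) / Gamma ((p + 1) / 2)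

lemma momentCoeff_nonneg {p : ℝ} (hp : -1 < p) (s : ℝ) : 0 ≤ momentCoeff p s := by
  have hI : 0 ≤ ∫ t in Ioi (0 : ℝ), t ^ p * exp (-t ^ 2 - s * t ^ 4) :=
    setIntegral_nonneg measurableSet_Ioi fun t ht => by
      have := rpow_nonneg (le_of_lt ht) p
      positivity
  have hG : 0 < Gamma ((p + 1) / 2) := Gamma_pos_of_pos (by linarith)
  unfold momentCoeff
  positivity

lemma setIntegral_rpow_mul_exp_neg_sq_sub_le {p s : ℝ} (hp : -1 < p) (hs : 0 < s) :
    ∫ t in Ioi (0 : ℝ), t ^ p * exp (-t ^ 2 - s * t ^ 4) ≤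
      s ^ (-(p + 1) / 4) * (1 / 4) * Gamma ((p + 1) / 4) := by
  rw [← integral_rpow_mul_exp_neg_mul_rpow (by norm_num) hp hs]
  refine integral_mono_of_nonneg ?_ (integrableOn_rpow_mul_exp_neg_mul_rpow hp (by norm_num) hs) ?_
  · filter_upwards [ae_restrict_mem measurableSet_Ioi] with t ht
    have := rpow_nonneg ht.le p
    positivity
  · filter_upwards [ae_restrict_mem measurableSet_Ioi] with t ht
    refine mul_le_mul_of_nonneg_left (exp_le_exp.2 ?_) (rpow_nonneg ht.le p)
    rw [show (4 : ℝ) = ((4 : ℕ) : ℝ) by norm_num, rpow_natCast]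
    nlinarith [sq_nonneg t]

lemma momentCoeff_le {p s : ℝ} (hp : -1 < p) (hs : 0 < s) :
    momentCoeff p s ≤ √π * (4 * s) ^ (-(p + 1) / 4) / Gamma ((p + 1) / 4 + 1 / 2) := by
  set q := (p + 1) / 4 with hq_def
  have hq : 0 < q := by linarith
  have hG2q : 0 < Gamma (2 * q) := Gamma_pos_of_pos (by linarith)
  have hGq : 0 < Gamma (q + 1 / 2) := Gamma_pos_of_pos (by linarith)
  have h4s : (4 * s) ^ (-q) = 2 ^ (1 - 2 * q) * s ^ (-q) / 2 := by
    rw [mul_rpow (by norm_num) hs.le, rpow_sub two_pos, rpow_one,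
      show (4 : ℝ) = 2 ^ (2 : ℝ) by norm_num, ← rpow_mul zero_le_two, mul_neg,
      rpow_neg zero_le_two]
    ring
  have hI := setIntegral_rpow_mul_exp_neg_sq_sub_le hp hs
  rw [show -(p + 1) / 4 = -q by ring] at hI
  calc momentCoeff p s ≤ 2 * (s ^ (-q) * (1 / 4) * Gamma q) / Gamma (2 * q) := by
        rw [momentCoeff, show (p + 1) / 2 = 2 * q by ring]
        gcongr
    _ = √π * (4 * s) ^ (-(p + 1) / 4) / Gamma ((p + 1) / 4 + 1 / 2) := by
        rw [show -(p + 1) / 4 = -q by ring, h4s, div_eq_div_iff hG2q.ne' hGq.ne']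
        linear_combination s ^ (-q) / 2 * Gamma_mul_Gamma_add_half q

lemma pow_le_mul_exp_one_pow_mul_Gamma {n : ℕ} {x : ℝ} (hn : 2 ≤ n) (hx : (n : ℝ) ≤ x) :
    (n : ℝ) ^ n ≤ n * exp 1 ^ n * Gamma x := by
  obtain ⟨m, rfl⟩ : ∃ m, n = m + 1 := ⟨n - 1, by omega⟩
  have hfac : ((m + 1) ^ (m + 1) : ℝ) ≤ (m + 1).factorial * exp 1 ^ (m + 1) := by
    have := pow_div_factorial_le_exp (x := ((m + 1 : ℕ) : ℝ)) (Nat.cast_nonneg _) (m + 1)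
    rw [div_le_iff₀ (by positivity), ← exp_one_pow, mul_comm] at this
    exact_mod_cast this
  have hGamma : (m.factorial : ℝ) ≤ Gamma x := by
    rw [← Gamma_nat_eq_factorial]
    have h2 : (2 : ℝ) ≤ m + 1 := by exact_mod_cast hn
    exact Gamma_strictMonoOn_Ici.monotoneOn h2 (h2.trans (by exact_mod_cast hx))
      (by exact_mod_cast hx)
  rw [Nat.factorial_succ, Nat.cast_mul] at hfac
  push_cast at hx ⊢
  calc ((m : ℝ) + 1) ^ (m + 1) ≤ (m + 1) * m.factorial * exp 1 ^ (m + 1) := by exact_mod_cast hfac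
    _ ≤ (m + 1) * exp 1 ^ (m + 1) * Gamma x := by
      rw [mul_right_comm]
      gcongr

lemma summable_rpow_mul_geometric {r : ℝ} (x : ℝ) (hr0 : 0 ≤ r) (hr1 : r < 1) :
    Summable fun n : ℕ => (n : ℝ) ^ x * r ^ n := by
  refine Summable.of_norm_bounded_eventually_nat
    (summable_pow_mul_geometric_of_norm_lt_one ⌈x⌉₊ (by rwa [norm_of_nonneg hr0])) ?_
  filter_upwards [eventually_ge_atTop 1] with n hn
  have hn' : (1 : ℝ) ≤ n := by exact_mod_cast hn
  rw [norm_of_nonneg (by positivity), ← rpow_natCast (n : ℝ) ⌈x⌉₊]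
  gcongr
  exact Nat.le_ceil x

lemma momentCoeff_mul_pow_le {τ s : ℝ} {k : ℕ} (hτ : -2 < τ) (hs : 0 < s) (hk : 2 ≤ k) :
    momentCoeff (τ + 4 * k + 1) s * (k : ℝ) ^ k ≤
      √π * (4 * s) ^ (-(τ + 2) / 4) * (k * (exp 1 / (4 * s)) ^ k) := by
  have hp : -1 < τ + 4 * k + 1 := by linarith [k.cast_nonneg (α := ℝ)]
  set x := (τ + 4 * k + 1 + 1) / 4 + 1 / 2 with hx_def
  have hkx : (k : ℝ) ≤ x := by rw [hx_def]; linarith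
  have hGx : 0 < Gamma x := Gamma_pos_of_pos (by linarith [k.cast_nonneg (α := ℝ)])
  have h4s : (4 * s) ^ (-(τ + 4 * k + 1 + 1) / 4) = (4 * s) ^ (-(τ + 2) / 4) / (4 * s) ^ k := by
    rw [← rpow_natCast, ← rpow_sub (by positivity)]
    ring_nf
  calc momentCoeff (τ + 4 * k + 1) s * (k : ℝ) ^ k
      ≤ √π * ((4 * s) ^ (-(τ + 2) / 4) / (4 * s) ^ k) / Gamma x * (k * exp 1 ^ k * Gamma x) := by
        rw [← h4s]
        gcongr
        · exact momentCoeff_le hp hs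
        · exact pow_le_mul_exp_one_pow_mul_Gamma hk hkx
    _ = √π * (4 * s) ^ (-(τ + 2) / 4) * (k * (exp 1 / (4 * s)) ^ k) := by
        rw [div_pow]
        field_simp

lemma momentCoeff_mul_abs_mul_pow_le {τ s a A b η y : ℝ} {k : ℕ} (hτ : -2 < τ) (hs : 0 < s)
    (ha : 0 ≤ a) (hA : 0 ≤ A) (hη : 0 ≤ η) (hk : 2 ≤ k)
    (hy : |y| ≤ A * (a / exp 1) ^ k * (k : ℝ) ^ ((k : ℝ) + b + 1 / 2)) :
    momentCoeff (τ + 4 * k + 1) s * |y| * η ^ k ≤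
      √π * (4 * s) ^ (-(τ + 2) / 4) * A * ((k : ℝ) ^ (b + 3 / 2) * (a * η / (4 * s)) ^ k) := by
  have hk0 : (0 : ℝ) < k := by positivity
  have hc := momentCoeff_nonneg (p := τ + 4 * k + 1) (by linarith [k.cast_nonneg (α := ℝ)]) s
  calc momentCoeff (τ + 4 * k + 1) s * |y| * η ^ k
      ≤ momentCoeff (τ + 4 * k + 1) s * (A * (a / exp 1) ^ k * (k : ℝ) ^ ((k : ℝ) + b + 1 / 2)) *
          η ^ k := by gcongr
    _ = A * (k : ℝ) ^ (b + 1 / 2) * (a * η / exp 1) ^ k *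
          (momentCoeff (τ + 4 * k + 1) s * (k : ℝ) ^ k) := by
        rw [show (k : ℝ) + b + 1 / 2 = k + (b + 1 / 2) by ring, rpow_add hk0, rpow_natCast]
        ring
    _ ≤ A * (k : ℝ) ^ (b + 1 / 2) * (a * η / exp 1) ^ k *
          (√π * (4 * s) ^ (-(τ + 2) / 4) * (k * (exp 1 / (4 * s)) ^ k)) := by
        have := momentCoeff_mul_pow_le hτ hs hk
        gcongr
    _ = √π * (4 * s) ^ (-(τ + 2) / 4) * A * ((k : ℝ) ^ (b + 3 / 2) * (a * η / (4 * s)) ^ k) := by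
        rw [show b + 3 / 2 = b + 1 / 2 + 1 by ring, rpow_add_one hk0.ne', div_pow, div_pow, div_pow]
        field_simp

theorem stmt_8 (τ σ η a A b : ℝ) (hτ : -2 < τ) (hσ : 0 < σ)
    (hη0 : 0 ≤ η) (hη1 : η < 1) (ha : 0 < a) (hA : 0 < A)
    (hηstar : η < 4 * σ / (a + 4 * σ))
    (f : ℕ → ℝ)
    (hf : ∀ k : ℕ, 1 ≤ k →
      |f k| ≤ A * (a / Real.exp 1) ^ k * (k : ℝ) ^ ((k : ℝ) + b + 1 / 2)) :
    Summable (fun k : ℕ =>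
      (2 * ∫ t in Ioi (0 : ℝ),
          t ^ (τ + 4 * k + 1) * Real.exp (-t ^ 2 - σ * (1 - η) * t ^ 4)) /
        Real.Gamma ((τ + 4 * k + 2) / 2) * |f k| * η ^ k) := by
  set s := σ * (1 - η)
  have hs : 0 < s := mul_pos hσ (by linarith)
  have hr1 : a * η / (4 * s) < 1 := by
    rw [lt_div_iff₀ (by linarith)] at hηstar
    rw [div_lt_one (by positivity)]
    linarith
  have hterm (k : ℕ) : (2 * ∫ t in Ioi (0 : ℝ), t ^ (τ + 4 * k + 1) * exp (-t ^ 2 - s * t ^ 4)) /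
      Gamma ((τ + 4 * k + 2) / 2) * |f k| * η ^ k = momentCoeff (τ + 4 * k + 1) s * |f k| * η ^ k := by
    rw [momentCoeff, show τ + 4 * k + 1 + 1 = τ + 4 * k + 2 by ring]
  simp_rw [hterm]
  refine Summable.of_norm_bounded_eventually_nat
    ((summable_rpow_mul_geometric (b + 3 / 2) (by positivity) hr1).mul_left
      (√π * (4 * s) ^ (-(τ + 2) / 4) * A)) ?_
  filter_upwards [eventually_ge_atTop 2] with k hk
  have hc := momentCoeff_nonneg (p := τ + 4 * k + 1) (by linarith [k.cast_nonneg (α := ℝ)]) s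
  rw [norm_of_nonneg (by positivity)]
  exact momentCoeff_mul_abs_mul_pow_le hτ hs ha.le hA.le hη0 hk (hf k (by omega))
end

section
/- For γ > 0 and τ > -2, the coefficients d_k = 2 ∫_0^∞ t^{τ+4k+1} e^{-t² - γt⁶} dt / Γ((τ+4k+2)/2) satisfy d_k ≤ C(γ,τ) (12e²γ)^{-2k/3} k^{-4k/3} k^{-4β/3} for large k with β = (τ+2)/4; consequently for any sequence f_k with |f_k| ≤ A(a/e)^k k^{k+b+1/2}, the series Σ_k d_k f_k converges absolutely. -/
/-!
Write `t ^ (τ + 4k + 1) = t ^ (τ + 1 + 2j) · (t ^ 6) ^ s` with `s = ⌊2k/3⌋` and `j = 2k - 3s ≤ 2`.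
The bound `x ^ s e^{-γx} ≤ s! / γ ^ s` reduces the integral to the Gaussian moment `Γ(β + j) / 2`,
`β = (τ + 2)/2`, and `Γ(β + 2k) ≥ β (3s - 1)! Γ(β + j)`, so `d_k ≤ s! / (γ ^ s β (3s - 1)!)`.
As `(3s - 1)! ≥ s! (s + 1) ^ (2s - 1)` and `2s - 1 ≥ k + ⌊k/6⌋`, `d_k` is `O(N ^ k / k ^ (k + ⌊k/6⌋))`.
On the other side `k ^ (b + 1/2) ≤ ⌈b + 1/2⌉₊! e ^ k` absorbs the polynomial factor of `f_k`, so
`|f_k| = O(a ^ k k ^ k)`, and the product `O(N ^ k / k ^ ⌊k/6⌋)` is eventually geometric.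
-/

open MeasureTheory Real Set Filter
open scoped Nat

lemma pow_mul_exp_neg_mul_le {γ x : ℝ} (hγ : 0 < γ) (hx : 0 ≤ x) (s : ℕ) :
    x ^ s * exp (-(γ * x)) ≤ s ! / γ ^ s := by
  have h := Real.pow_div_factorial_le_exp _ (mul_nonneg hγ.le hx) s
  rw [div_le_iff₀ (by positivity), mul_pow] at h
  rw [exp_neg, le_div_iff₀ (by positivity), ← div_eq_mul_inv, div_mul_eq_mul_div,
    div_le_iff₀ (exp_pos _)]
  linarith

lemma integral_rpow_mul_exp_neg_sq_sub_mul_pow_six_le {γ p : ℝ} (hγ : 0 < γ) (hp : -1 < p)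
    (s : ℕ) :
    ∫ t in Ioi (0 : ℝ), t ^ (p + 6 * s) * exp (-t ^ 2 - γ * t ^ 6) ≤
      s ! / γ ^ s * (Gamma ((p + 1) / 2) / 2) := by
  have hpt : ∀ t ∈ Ioi (0 : ℝ), t ^ (p + 6 * s) * exp (-t ^ 2 - γ * t ^ 6) ≤
      s ! / γ ^ s * (t ^ p * exp (-t ^ 2)) := by
    intro t (ht : 0 < t)
    have hsplit : t ^ (p + 6 * s) * exp (-t ^ 2 - γ * t ^ 6) =
        t ^ p * exp (-t ^ 2) * ((t ^ 6) ^ s * exp (-(γ * t ^ 6))) := by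
      rw [rpow_add ht, ← pow_mul, show (6 * s : ℝ) = ((6 * s : ℕ) : ℝ) by push_cast; ring,
        rpow_natCast, sub_eq_add_neg, exp_add]
      ring
    rw [hsplit, mul_comm _ (t ^ p * _)]
    exact mul_le_mul_of_nonneg_left (pow_mul_exp_neg_mul_le hγ (by positivity) s)
      (by positivity)
  have hgauss : ∫ t in Ioi (0 : ℝ), t ^ p * exp (-t ^ 2) = 1 / 2 * Gamma ((p + 1) / 2) := by
    simpa only [rpow_two] using integral_rpow_mul_exp_neg_rpow two_pos hp
  have hint : IntegrableOn (fun t : ℝ => t ^ p * exp (-t ^ 2)) (Ioi 0) := by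
    simpa using integrableOn_rpow_mul_exp_neg_mul_sq one_pos hp
  calc ∫ t in Ioi (0 : ℝ), t ^ (p + 6 * s) * exp (-t ^ 2 - γ * t ^ 6)
      ≤ ∫ t in Ioi (0 : ℝ), s ! / γ ^ s * (t ^ p * exp (-t ^ 2)) := by
        refine integral_mono_of_nonneg ?_ (hint.const_mul _) ?_
        · filter_upwards [ae_restrict_mem measurableSet_Ioi] with t (ht : 0 < t)
          positivity
        · filter_upwards [ae_restrict_mem measurableSet_Ioi] with t ht
          exact hpt t ht
    _ = s ! / γ ^ s * (Gamma ((p + 1) / 2) / 2) := by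
        rw [integral_const_mul, hgauss]
        ring

lemma mul_factorial_mul_Gamma_le_Gamma_add {x : ℝ} (hx : 0 < x) (n : ℕ) :
    x * n ! * Gamma x ≤ Gamma (x + n + 1) := by
  induction n with
  | zero => simp [Gamma_add_one hx.ne']
  | succ n ih =>
    have hΓ : 0 ≤ x * n ! * Gamma x := by have := Gamma_pos_of_pos hx; positivity
    rw [Nat.factorial_succ, Nat.cast_mul, Nat.cast_succ,
      show x + (n + 1 : ℝ) + 1 = x + n + 1 + 1 by ring, Gamma_add_one (by positivity)]
    nlinarith

lemma rpow_le_factorial_ceil_mul_exp {x : ℝ} (hx : 1 ≤ x) (y : ℝ) :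
    x ^ y ≤ ⌈y⌉₊ ! * exp x := by
  have h := Real.pow_div_factorial_le_exp _ (by linarith : 0 ≤ x) ⌈y⌉₊
  rw [div_le_iff₀ (by positivity)] at h
  calc x ^ y ≤ x ^ (⌈y⌉₊ : ℝ) := rpow_le_rpow_of_exponent_le hx (Nat.le_ceil y)
    _ ≤ ⌈y⌉₊ ! * exp x := by rw [rpow_natCast]; linarith

lemma pow_add_div_six_mul_factorial_le {k : ℕ} (hk : 8 ≤ k) :
    k ^ (k + k / 6) * (2 * k / 3)! ≤ 4 ^ k * (3 * (2 * k / 3) - 1)! := by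
  set s := 2 * k / 3
  have hfac : s ! * (s + 1) ^ (2 * s - 1) ≤ (3 * s - 1)! := by
    rw [show 3 * s - 1 = s + (2 * s - 1) by omega]
    exact Nat.factorial_mul_pow_le_factorial
  calc k ^ (k + k / 6) * s ! ≤ (2 * (s + 1)) ^ (k + k / 6) * s ! := by
        gcongr
        omega
    _ = 2 ^ (k + k / 6) * (s + 1) ^ (k + k / 6) * s ! := by rw [mul_pow]
    _ ≤ 2 ^ (2 * k) * (s + 1) ^ (2 * s - 1) * s ! := by
        gcongr <;> omega
    _ ≤ 4 ^ k * (3 * s - 1)! := by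
        rw [pow_mul, mul_assoc, mul_comm ((s + 1) ^ _)]
        exact Nat.mul_le_mul_left _ hfac

lemma summable_pow_div_pow_div (N : ℝ) {d : ℕ} (hd : 0 < d) :
    Summable fun k : ℕ => N ^ k / (k : ℝ) ^ (k / d) := by
  set L := 2 * max |N| 1
  have hL : 1 ≤ L := by have := le_max_right |N| 1; linarith
  refine ((summable_geometric_two).mul_left (L ^ d)).of_norm_bounded_eventually_nat ?_
  filter_upwards [eventually_ge_atTop ⌈L ^ d⌉₊, eventually_gt_atTop 0] with k hLk hk
  have hLk : L ^ d ≤ k := Nat.ceil_le.mp hLk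
  have hkpos : (0 : ℝ) < (k : ℝ) ^ (k / d) := by positivity
  have hL_pow : L ^ k ≤ (k : ℝ) ^ (k / d) * L ^ d := by
    calc L ^ k = (L ^ d) ^ (k / d) * L ^ (k % d) := by
          rw [← pow_mul, ← pow_add, Nat.div_add_mod]
      _ ≤ (k : ℝ) ^ (k / d) * L ^ d := by
          gcongr
          exact (Nat.mod_lt k hd).le
  have hN : |N| * 2 ≤ L := by have := le_max_left |N| 1; linarith
  rw [norm_div, norm_pow, norm_pow, Real.norm_eq_abs, Real.norm_natCast, div_le_iff₀ hkpos]
  calc |N| ^ k = (|N| * 2) ^ k * (1 / 2) ^ k := by rw [← mul_pow, mul_assoc]; norm_num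
    _ ≤ L ^ k * (1 / 2) ^ k := by gcongr
    _ ≤ L ^ d * (1 / 2) ^ k * (k : ℝ) ^ (k / d) := by
        nlinarith [mul_le_mul_of_nonneg_right hL_pow (by positivity : (0 : ℝ) ≤ (1 / 2) ^ k)]

lemma div_exp_one_pow_mul_rpow_le {a : ℝ} (ha : 0 ≤ a) {k : ℕ} (hk : 1 ≤ k) (y : ℝ) :
    (a / exp 1) ^ k * (k : ℝ) ^ ((k : ℝ) + y) ≤ ⌈y⌉₊ ! * a ^ k * (k : ℝ) ^ k := by
  have hk1 : (1 : ℝ) ≤ k := by exact_mod_cast hk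
  rw [rpow_add (by linarith), rpow_natCast]
  calc (a / exp 1) ^ k * ((k : ℝ) ^ k * (k : ℝ) ^ y)
      ≤ (a / exp 1) ^ k * ((k : ℝ) ^ k * (⌈y⌉₊ ! * exp k)) := by
        gcongr
        exact rpow_le_factorial_ceil_mul_exp hk1 y
    _ = ⌈y⌉₊ ! * a ^ k * (k : ℝ) ^ k := by
        rw [← exp_one_pow, div_pow]
        field_simp

/-- The coefficient `d_k` of the statement. -/
noncomputable def sexticCoeff (τ γ : ℝ) (k : ℕ) : ℝ :=
  (2 * ∫ t in Ioi (0 : ℝ), t ^ (τ + 4 * k + 1) * exp (-t ^ 2 - γ * t ^ 6)) /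
    Gamma ((τ + 4 * k + 2) / 2)

lemma sexticCoeff_nonneg {τ : ℝ} (hτ : -2 < τ) (γ : ℝ) (k : ℕ) : 0 ≤ sexticCoeff τ γ k := by
  have hint : 0 ≤ ∫ t in Ioi (0 : ℝ), t ^ (τ + 4 * k + 1) * exp (-t ^ 2 - γ * t ^ 6) :=
    setIntegral_nonneg measurableSet_Ioi fun t (ht : 0 < t) => by positivity
  have hΓ : 0 < Gamma ((τ + 4 * k + 2) / 2) :=
    Gamma_pos_of_pos (by linarith [(Nat.cast_nonneg k : (0 : ℝ) ≤ k)])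
  unfold sexticCoeff
  positivity

lemma sexticCoeff_le {τ γ : ℝ} (hτ : -2 < τ) (hγ : 0 < γ) {k s j : ℕ} (hsj : 3 * s + j = 2 * k)
    (hs : 0 < s) :
    sexticCoeff τ γ k ≤ s ! / γ ^ s / ((τ + 2) / 2 * (3 * s - 1 : ℕ)!) := by
  set β := (τ + 2) / 2
  have hβ : 0 < β := by simp only [β]; linarith
  have hsjR : (3 * s + j : ℝ) = 2 * k := by exact_mod_cast hsj
  have hΓ : 0 < Gamma (β + j) := Gamma_pos_of_pos (by positivity)
  have hnum : 2 * ∫ t in Ioi (0 : ℝ), t ^ (τ + 4 * k + 1) * exp (-t ^ 2 - γ * t ^ 6) ≤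
      s ! / γ ^ s * Gamma (β + j) := by
    have h := integral_rpow_mul_exp_neg_sq_sub_mul_pow_six_le hγ
      (by linarith [(Nat.cast_nonneg j : (0 : ℝ) ≤ j)] : -1 < τ + 1 + 2 * j) s
    rw [show τ + 1 + 2 * j + 6 * s = τ + 4 * k + 1 by linarith,
      show (τ + 1 + 2 * j + 1) / 2 = β + j by ring] at h
    linarith
  have hden : β * (3 * s - 1 : ℕ)! * Gamma (β + j) ≤ Gamma ((τ + 4 * k + 2) / 2) := by
    have h := mul_factorial_mul_Gamma_le_Gamma_add (by positivity : 0 < β + j) (3 * s - 1)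
    have harg : β + j + ((3 * s - 1 : ℕ) : ℝ) + 1 = (τ + 4 * k + 2) / 2 := by
      rw [Nat.cast_sub (by omega)]
      push_cast
      simp only [β]
      linarith
    rw [harg] at h
    refine le_trans ?_ h
    gcongr
    linarith [(Nat.cast_nonneg j : (0 : ℝ) ≤ j)]
  calc sexticCoeff τ γ k
      ≤ s ! / γ ^ s * Gamma (β + j) / (β * (3 * s - 1 : ℕ)! * Gamma (β + j)) :=
        div_le_div₀ (by positivity) hnum (by positivity) hden
    _ = s ! / γ ^ s / (β * (3 * s - 1 : ℕ)!) := by field_simp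

lemma sexticCoeff_le_pow_div {τ γ : ℝ} (hτ : -2 < τ) (hγ : 0 < γ) {k : ℕ} (hk : 8 ≤ k) :
    sexticCoeff τ γ k ≤ (4 * max 1 γ⁻¹) ^ k / ((τ + 2) / 2 * (k : ℝ) ^ (k + k / 6)) := by
  set s := 2 * k / 3
  set g := max 1 γ⁻¹
  have hβ : 0 < (τ + 2) / 2 := by linarith
  have hγg : 1 ≤ γ ^ s * g ^ k :=
    calc 1 = γ ^ s * γ⁻¹ ^ s := by rw [← mul_pow, mul_inv_cancel₀ hγ.ne', one_pow]
      _ ≤ γ ^ s * g ^ s := by gcongr; exact le_max_right _ _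
      _ ≤ γ ^ s * g ^ k := by gcongr; exacts [le_max_left _ _, by omega]
  have hfac : (k : ℝ) ^ (k + k / 6) * s ! ≤ 4 ^ k * (3 * s - 1 : ℕ)! := by
    exact_mod_cast pow_add_div_six_mul_factorial_le hk
  refine (sexticCoeff_le hτ hγ (s := s) (j := 2 * k - 3 * s) (by omega) (by omega)).trans ?_
  rw [div_div, div_le_div_iff₀ (by positivity) (by positivity)]
  calc (s ! : ℝ) * ((τ + 2) / 2 * (k : ℝ) ^ (k + k / 6))
      = (τ + 2) / 2 * ((k : ℝ) ^ (k + k / 6) * s !) := by ring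
    _ ≤ (τ + 2) / 2 * (4 ^ k * (3 * s - 1 : ℕ)!) * 1 := by rw [mul_one]; gcongr
    _ ≤ (τ + 2) / 2 * (4 ^ k * (3 * s - 1 : ℕ)!) * (γ ^ s * g ^ k) := by gcongr
    _ = (4 * g) ^ k * (γ ^ s * ((τ + 2) / 2 * (3 * s - 1 : ℕ)!)) := by ring

theorem stmt_9 (τ γ a A b : ℝ) (hτ : -2 < τ) (hγ : 0 < γ)
    (ha : 0 < a) (hA : 0 < A)
    (f : ℕ → ℝ)
    (hf : ∀ k : ℕ, 1 ≤ k →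
      |f k| ≤ A * (a / Real.exp 1) ^ k * (k : ℝ) ^ ((k : ℝ) + b + 1 / 2)) :
    Summable (fun k : ℕ =>
      |(2 * ∫ t in Ioi (0 : ℝ),
          t ^ (τ + 4 * k + 1) * Real.exp (-t ^ 2 - γ * t ^ 6)) /
        Real.Gamma ((τ + 4 * k + 2) / 2) * f k|) := by
  set C := A * ⌈b + 1 / 2⌉₊ ! / ((τ + 2) / 2)
  set g := max 1 γ⁻¹
  refine ((summable_pow_div_pow_div (4 * a * g) (d := 6) (by norm_num)).mul_left C
    ).of_norm_bounded_eventually_nat ?_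
  filter_upwards [eventually_ge_atTop 8] with k hk
  have hβ : 0 < (τ + 2) / 2 := by linarith
  have hd := sexticCoeff_le_pow_div hτ hγ hk
  have hfk : |f k| ≤ A * (⌈b + 1 / 2⌉₊ ! * a ^ k * (k : ℝ) ^ k) := by
    refine (hf k (by omega)).trans ?_
    rw [mul_assoc, add_assoc]
    exact mul_le_mul_of_nonneg_left (div_exp_one_pow_mul_rpow_le ha.le (by omega) _) hA.le
  change ‖|sexticCoeff τ γ k * f k|‖ ≤ _
  rw [Real.norm_eq_abs, abs_abs, abs_mul, abs_of_nonneg (sexticCoeff_nonneg hτ γ k)]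
  calc sexticCoeff τ γ k * |f k|
      ≤ (4 * g) ^ k / ((τ + 2) / 2 * (k : ℝ) ^ (k + k / 6)) *
          (A * (⌈b + 1 / 2⌉₊ ! * a ^ k * (k : ℝ) ^ k)) :=
        mul_le_mul hd hfk (abs_nonneg _) (by positivity)
    _ = C * ((4 * a * g) ^ k / (k : ℝ) ^ (k / 6)) := by
        have hk0 : (0 : ℝ) < k := by positivity
        rw [pow_add, mul_pow, mul_pow]
        simp only [C, g]
        field_simp
        ring
end

section
/- Let h_k = (-1)^k Γ((τ+4k+2)/2) u^k / (2·Γ(k+1)) for u > 0 and τ > -2, and let σ > 0. Then the double series Σ_{l=0}^∞ J(τ,l) Σ_{k=0}^l C(l,k) σ^{l-k} 2·k!·h_k/Γ((τ+4k+2)/2), with J(τ,l) = (1/l!)∫_0^∞ t^{τ+4l+1}e^{-t²-σt⁴}dt, is absolutely bounded by ∫_0^∞ t^{τ+1} e^{-t² - σt⁴ + |σ-u|t⁴} dt, which is finite whenever |σ - u| < σ. -/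
open MeasureTheory Real Set Filter

/-!
Substituting `h k`, the factors `Γ((τ + 4k + 2)/2)` and `k!` cancel and the inner sum is the
binomial expansion of `(σ - u) ^ l`. The `l`-th term is then the integral of
`|σ - u| ^ l / l! · t ^ (τ + 4l + 1) e^(-t² - σt⁴)`, a nonnegative function, and these functions sum
to `t ^ (τ + 1) e^(-t² - σt⁴) e^(|σ - u| t⁴)` by the exponential series; monotone convergence
exchanges sum and integral. For `|σ - u| < σ` the last integrand is dominated by the Gaussian
`t ^ (τ + 1) e^(-t²)`.
-/

namespace MeasureTheory

variable {α : Type*} [MeasurableSpace α] {μ : Measure α}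

-- Unlike `integral_tsum`, no summability of the integrals is assumed: if they are not summable,
-- then neither is `F` integrable, and both sides are junk `0`.
theorem tsum_integral_eq_integral_of_hasSum_of_nonneg {g : ℕ → α → ℝ} {F : α → ℝ}
    (hg : ∀ n, Integrable (g n) μ) (hg₀ : ∀ n, 0 ≤ᵐ[μ] g n)
    (hF : ∀ᵐ x ∂μ, HasSum (fun n ↦ g n x) (F x)) :
    ∑' n, ∫ x, g n x ∂μ = ∫ x, F x ∂μ := by
  have hg₀' : ∀ᵐ x ∂μ, ∀ n, 0 ≤ g n x := ae_all_iff.2 hg₀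
  have hF₀ : 0 ≤ᵐ[μ] F := by
    filter_upwards [hF, hg₀'] with x hx hx₀ using hx.nonneg hx₀
  have hF_meas : AEStronglyMeasurable F μ :=
    aestronglyMeasurable_of_tendsto_ae atTop
      (fun n ↦ Finset.aestronglyMeasurable_fun_sum _ fun i _ ↦ (hg i).1)
      (by filter_upwards [hF] with x hx using hx.tendsto_sum_nat)
  have hlintegral : ∫⁻ x, ENNReal.ofReal (F x) ∂μ = ∑' n, ENNReal.ofReal (∫ x, g n x ∂μ) := by
    calc ∫⁻ x, ENNReal.ofReal (F x) ∂μ = ∫⁻ x, ∑' n, ENNReal.ofReal (g n x) ∂μ := by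
          refine lintegral_congr_ae ?_
          filter_upwards [hF, hg₀'] with x hx hx₀
          rw [← hx.tsum_eq, ENNReal.ofReal_tsum_of_nonneg hx₀ hx.summable]
      _ = ∑' n, ∫⁻ x, ENNReal.ofReal (g n x) ∂μ :=
          lintegral_tsum fun n ↦ (hg n).aemeasurable.ennreal_ofReal
      _ = ∑' n, ENNReal.ofReal (∫ x, g n x ∂μ) := by
          simp only [ofReal_integral_eq_lintegral_ofReal (hg _) (hg₀ _)]
  rw [integral_eq_lintegral_of_nonneg_ae hF₀ hF_meas, hlintegral,
    ENNReal.tsum_toReal_eq fun _ ↦ ENNReal.ofReal_ne_top]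
  exact tsum_congr fun n ↦ (ENNReal.toReal_ofReal (integral_nonneg_of_ae (hg₀ n))).symm

end MeasureTheory

theorem integrableOn_rpow_mul_exp_neg_sq_sub_mul_pow_four {p b : ℝ} (hp : -1 < p) (hb : 0 ≤ b) :
    IntegrableOn (fun t : ℝ ↦ t ^ p * exp (-t ^ 2 - b * t ^ 4)) (Ioi 0) := by
  refine (integrableOn_rpow_mul_exp_neg_mul_sq one_pos hp).mono' ?_ ?_
  · refine ContinuousOn.aestronglyMeasurable ?_ measurableSet_Ioi
    exact (continuousOn_id.rpow_const fun t ht ↦ Or.inl (ne_of_gt ht)).mul (by fun_prop)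
  · filter_upwards [ae_restrict_mem measurableSet_Ioi] with t (ht : 0 < t)
    rw [norm_mul, norm_of_nonneg (rpow_nonneg ht.le p), norm_of_nonneg (exp_nonneg _)]
    gcongr
    nlinarith [pow_pos ht 4]

theorem hasSum_pow_div_factorial_mul_rpow_mul_exp (τ σ c : ℝ) {t : ℝ} (ht : 0 < t) :
    HasSum (fun l : ℕ ↦ c ^ l / l.factorial * (t ^ (τ + 4 * l + 1) * exp (-t ^ 2 - σ * t ^ 4)))
      (t ^ (τ + 1) * exp (-t ^ 2 - σ * t ^ 4 + c * t ^ 4)) := by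
  have hpow (l : ℕ) : t ^ (τ + 4 * l + 1) = t ^ (τ + 1) * (t ^ 4) ^ l := by
    rw [show τ + 4 * l + 1 = τ + 1 + (4 * l : ℕ) by push_cast; ring, rpow_add ht,
      rpow_natCast, pow_mul]
  have hexp := (NormedSpace.expSeries_div_hasSum_exp (c * t ^ 4)).mul_left
    (t ^ (τ + 1) * exp (-t ^ 2 - σ * t ^ 4))
  rw [← exp_eq_exp_ℝ, mul_assoc, ← exp_add] at hexp
  refine hexp.congr_fun fun l ↦ ?_
  rw [hpow, mul_pow]
  ring

theorem sum_choose_mul_pow_mul_div_Gamma_eq_sub_pow {τ σ u : ℝ} (hτ : -2 < τ) {h : ℕ → ℝ}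
    (hh : ∀ k : ℕ, h k = (-1) ^ k * Gamma ((τ + 4 * k + 2) / 2) * u ^ k / (2 * k.factorial))
    (l : ℕ) :
    ∑ k ∈ Finset.range (l + 1), (l.choose k : ℝ) * σ ^ (l - k) *
      (2 * k.factorial * h k / Gamma ((τ + 4 * k + 2) / 2)) = (σ - u) ^ l := by
  rw [sub_eq_neg_add, add_pow]
  refine Finset.sum_congr rfl fun k _ ↦ ?_
  have hΓ : Gamma ((τ + 4 * k + 2) / 2) ≠ 0 :=
    (Gamma_pos_of_pos (by linarith [(k.cast_nonneg : (0 : ℝ) ≤ k)])).ne'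
  rw [hh]
  field_simp
  ring

theorem stmt_10_general (τ σ u : ℝ) (hτ : -2 < τ) (hσ : 0 < σ)
    (h : ℕ → ℝ)
    (hh : ∀ k : ℕ, h k = (-1) ^ k * Real.Gamma ((τ + 4 * k + 2) / 2) * u ^ k /
      (2 * (k.factorial : ℝ)))
    (J : ℕ → ℝ)
    (hJ : ∀ l : ℕ, J l = (1 / (l.factorial : ℝ)) *
      ∫ t in Ioi (0 : ℝ), t ^ (τ + 4 * l + 1) * Real.exp (-t ^ 2 - σ * t ^ 4)) :
    (∑' l : ℕ,
        |J l * ∑ k ∈ Finset.range (l + 1),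
          (l.choose k : ℝ) * σ ^ (l - k) *
            (2 * (k.factorial : ℝ) * h k / Real.Gamma ((τ + 4 * k + 2) / 2))|)
      ≤ ∫ t in Ioi (0 : ℝ),
          t ^ (τ + 1) * Real.exp (-t ^ 2 - σ * t ^ 4 + |σ - u| * t ^ 4) ∧
    (|σ - u| < σ →
      IntegrableOn
        (fun t : ℝ => t ^ (τ + 1) * Real.exp (-t ^ 2 - σ * t ^ 4 + |σ - u| * t ^ 4))
        (Ioi 0)) := by
  set c := |σ - u|
  have hintegrable (l : ℕ) : IntegrableOn
      (fun t : ℝ ↦ t ^ (τ + 4 * l + 1) * exp (-t ^ 2 - σ * t ^ 4)) (Ioi 0) :=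
    integrableOn_rpow_mul_exp_neg_sq_sub_mul_pow_four
      (by linarith [(l.cast_nonneg : (0 : ℝ) ≤ l)]) hσ.le
  have hterm (l : ℕ) : |J l * (σ - u) ^ l| = ∫ t in Ioi 0,
      c ^ l / l.factorial * (t ^ (τ + 4 * l + 1) * exp (-t ^ 2 - σ * t ^ 4)) := by
    rw [integral_const_mul, hJ, abs_mul, abs_pow, abs_of_nonneg, div_eq_mul_one_div]
    · ring
    · exact mul_nonneg (by positivity) (setIntegral_nonneg measurableSet_Ioi fun t ht ↦
        mul_nonneg (rpow_nonneg (le_of_lt ht) _) (exp_nonneg _))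
  refine ⟨le_of_eq ?_, fun hc ↦ ?_⟩
  · simp only [sum_choose_mul_pow_mul_div_Gamma_eq_sub_pow hτ hh, hterm]
    refine tsum_integral_eq_integral_of_hasSum_of_nonneg (fun l ↦ (hintegrable l).const_mul _)
      (fun l ↦ ?_) ?_
    · filter_upwards [ae_restrict_mem measurableSet_Ioi] with t (ht : 0 < t)
      positivity
    · filter_upwards [ae_restrict_mem measurableSet_Ioi] with t ht
      exact hasSum_pow_div_factorial_mul_rpow_mul_exp τ σ c ht
  · convert integrableOn_rpow_mul_exp_neg_sq_sub_mul_pow_four (p := τ + 1) (b := σ - c)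
      (by linarith) (by linarith) using 4
    ring

theorem stmt_10 (τ σ u : ℝ) (hτ : -2 < τ) (hσ : 0 < σ) (hu : 0 < u)
    (h : ℕ → ℝ)
    (hh : ∀ k : ℕ, h k = (-1) ^ k * Real.Gamma ((τ + 4 * k + 2) / 2) * u ^ k /
      (2 * (k.factorial : ℝ)))
    (J : ℕ → ℝ)
    (hJ : ∀ l : ℕ, J l = (1 / (l.factorial : ℝ)) *
      ∫ t in Ioi (0 : ℝ), t ^ (τ + 4 * l + 1) * Real.exp (-t ^ 2 - σ * t ^ 4)) :
    (∑' l : ℕ,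
        |J l * ∑ k ∈ Finset.range (l + 1),
          (l.choose k : ℝ) * σ ^ (l - k) *
            (2 * (k.factorial : ℝ) * h k / Real.Gamma ((τ + 4 * k + 2) / 2))|)
      ≤ ∫ t in Ioi (0 : ℝ),
          t ^ (τ + 1) * Real.exp (-t ^ 2 - σ * t ^ 4 + |σ - u| * t ^ 4) ∧
    (|σ - u| < σ →
      IntegrableOn
        (fun t : ℝ => t ^ (τ + 1) * Real.exp (-t ^ 2 - σ * t ^ 4 + |σ - u| * t ^ 4))
        (Ioi 0)) :=
  stmt_10_general τ σ u hτ hσ h hh J hJ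
end
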